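/- Every edge-coloured graph G satisfies t(C_6^A, G) ≤ (1/2)^6, where t denotes the (not necessarily injective) colour-preserving homomorphism density. -/

import Mathlib

open SimpleGraph Function

/-- An edge-coloured graph: a simple graph together with a symmetric colour function
(`true` = red, `false` = blue). -/
structure ECGraph (V : Type*) where
  graph : SimpleGraph V
  color : V → V → Bool
  color_symm : ∀ u v, color u v = color v u

/-- A colour-preserving homomorphism of edge-coloured graphs. -/
def IsHom {α β : Type*} (H : ECGraph α) (G : ECGraph β) (f : α → β) : Prop :=
  ∀ u v, H.graph.Adj u v → G.graph.Adj (f u) (f v) ∧ G.color (f u) (f v) = H.color u v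

/-- Homomorphism density `t(H,G) = hom(H,G)/v(G)^{v(H)}`. -/
noncomputable def homDensity {α β : Type*} [Fintype α] [Fintype β]
    (H : ECGraph α) (G : ECGraph β) : ℝ :=
  (Nat.card {f : α → β // IsHom H G f} : ℝ) / (Fintype.card β : ℝ) ^ (Fintype.card α)

/-- Injective homomorphism density
`t_inj(H,G) = hom_inj(H,G)·(v(G)-v(H))!/v(G)!`. -/
noncomputable def injDensity {α β : Type*} [Fintype α] [Fintype β]
    (H : ECGraph α) (G : ECGraph β) : ℝ :=
  (Nat.card {f : α → β // Injective f ∧ IsHom H G f} : ℝ) *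
    (Nat.factorial (Fintype.card β - Fintype.card α)) / (Nat.factorial (Fintype.card β))

/-- The alternating 6-cycle `C_6^A`: the 6-cycle with edges coloured alternately
red and blue, so that every vertex is incident to one red and one blue edge. -/
def C6A : ECGraph (Fin 6) where
  graph := cycleGraph 6
  color u v := decide ((v = u + 1 ∧ Even u.val) ∨ (u = v + 1 ∧ Even v.val))
  color_symm u v := by rw [decide_eq_decide]; tauto

/-!
Let `S` be the signed adjacency matrix of `G` (red edges `1`, blue edges `-1`) and `J` the
all-ones matrix. The red and blue adjacency matrices are bounded entrywise by `(J + S) / 2` and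
`(J - S) / 2`, so `hom(C₆ᴬ, G) ≤ 2⁻⁶ tr (((J + S)(J - S))³)`. Splitting
`(J + S)(J - S) = (n J - S²) + (S J - J S)` into symmetric and antisymmetric parts, the trace of
the cube is `n⁶ + 3 D - tr S⁶`, where `D` is a polynomial in the sums of signed walks of
lengths one to four. Two Cauchy–Schwarz inequalities, one for the positive semidefinite form
`n² I - S²` and one for the Frobenius pairing, show `D ≤ 0`, and `tr S⁶ ≥ 0`.
-/

open Matrix Finset

section SymmetricMatrix

variable {ι : Type*} [Fintype ι]

theorem Matrix.IsSymm.dotProduct_mulVec_comm {W : Matrix ι ι ℝ} (hW : W.IsSymm) (u v : ι → ℝ) :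
    u ⬝ᵥ (W *ᵥ v) = (W *ᵥ u) ⬝ᵥ v := by
  rw [dotProduct_mulVec, ← mulVec_transpose, hW.eq]

theorem mulVec_dotProduct_self_le_sum_sq_mul (W : Matrix ι ι ℝ) (v : ι → ℝ) :
    (W *ᵥ v) ⬝ᵥ (W *ᵥ v) ≤ (∑ i, ∑ j, W i j ^ 2) * (v ⬝ᵥ v) := by
  simp only [dotProduct, mulVec, ← sq]
  rw [Finset.sum_mul]
  exact Finset.sum_le_sum fun i _ => Finset.sum_mul_sq_le_sq_mul_sq _ _ _

theorem sum_sum_sq_le_card_sq {W : Matrix ι ι ℝ} (hW : ∀ i j, |W i j| ≤ 1) :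
    ∑ i, ∑ j, W i j ^ 2 ≤ (Fintype.card ι : ℝ) ^ 2 := by
  calc ∑ i, ∑ j, W i j ^ 2 ≤ ∑ _i : ι, ∑ _j : ι, (1 : ℝ) := by
        gcongr with i _ j
        exact (sq_le_one_iff_abs_le_one _).mpr (hW i j)
    _ = (Fintype.card ι : ℝ) ^ 2 := by simp [sq]

/-- Cauchy–Schwarz for the positive semidefinite form `(u, v) ↦ c ⟪u, v⟫ - ⟪W u, W v⟫`. -/
theorem sq_mul_dotProduct_sub_le {W : Matrix ι ι ℝ} {c : ℝ}
    (hc : ∀ v, (W *ᵥ v) ⬝ᵥ (W *ᵥ v) ≤ c * (v ⬝ᵥ v)) (u v : ι → ℝ) :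
    (c * (u ⬝ᵥ v) - (W *ᵥ u) ⬝ᵥ (W *ᵥ v)) ^ 2 ≤
      (c * (u ⬝ᵥ u) - (W *ᵥ u) ⬝ᵥ (W *ᵥ u)) * (c * (v ⬝ᵥ v) - (W *ᵥ v) ⬝ᵥ (W *ᵥ v)) := by
  have hquad : ∀ t : ℝ, 0 ≤ (c * (v ⬝ᵥ v) - (W *ᵥ v) ⬝ᵥ (W *ᵥ v)) * (t * t)
      + 2 * (c * (u ⬝ᵥ v) - (W *ᵥ u) ⬝ᵥ (W *ᵥ v)) * t
      + (c * (u ⬝ᵥ u) - (W *ᵥ u) ⬝ᵥ (W *ᵥ u)) := fun t => by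
    have := hc (t • v + u)
    simp only [mulVec_add, mulVec_smul, add_dotProduct, dotProduct_add, smul_dotProduct,
      dotProduct_smul, smul_eq_mul, dotProduct_comm v u, dotProduct_comm (W *ᵥ v) (W *ᵥ u)] at this
    linarith
  have := discrim_le_zero hquad
  rw [discrim] at this
  linarith

theorem sum_sum_mul_mul_eq_dotProduct_mulVec (W : Matrix ι ι ℝ) (a b : ι → ℝ) :
    ∑ i, ∑ j, W i j * (a i * b j) = a ⬝ᵥ (W *ᵥ b) := by
  simp only [dotProduct, mulVec, Finset.mul_sum]
  exact Finset.sum_congr rfl fun i _ => Finset.sum_congr rfl fun j _ => by ring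

theorem two_mul_dotProduct_self_mul_le {W : Matrix ι ι ℝ} (hW : W.IsSymm) (u : ι → ℝ) :
    2 * (u ⬝ᵥ u) * ((W *ᵥ u) ⬝ᵥ (W *ᵥ u)) ≤
      (∑ i, ∑ j, W i j ^ 2) * (u ⬝ᵥ u) ^ 2 + (u ⬝ᵥ W *ᵥ u) ^ 2 := by
  set e := W *ᵥ u
  set α := u ⬝ᵥ u
  set β := u ⬝ᵥ e
  set R := 2 * α * (e ⬝ᵥ e) - β ^ 2
  -- `Y = α (e uᵀ + u eᵀ) - β u uᵀ` has Frobenius pairing `R` with `W` and Frobenius norm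
  -- `α² R`, so Cauchy–Schwarz gives `R ≤ α² ∑ W i j ^ 2`.
  let Y : ι → ι → ℝ := fun i j => α * (e i * u j + u i * e j) - β * (u i * u j)
  have hWY : ∑ i, ∑ j, W i j * Y i j = R := by
    have h : ∀ i j, W i j * Y i j = α * (W i j * (e i * u j)) + α * (W i j * (u i * e j))
        - β * (W i j * (u i * u j)) := fun i j => by ring
    simp only [h, Finset.sum_add_distrib, Finset.sum_sub_distrib, ← Finset.mul_sum,
      sum_sum_mul_mul_eq_dotProduct_mulVec, hW.dotProduct_mulVec_comm u e]
    simp only [R, β]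
    ring
  have hYY : ∑ i, ∑ j, Y i j ^ 2 = α ^ 2 * R := by
    have h : ∀ i j, Y i j ^ 2 = α ^ 2 * (e i ^ 2 * u j ^ 2) + α ^ 2 * (u i ^ 2 * e j ^ 2)
        + 2 * α ^ 2 * ((u i * e i) * (u j * e j)) - 2 * α * β * ((u i * e i) * u j ^ 2)
        - 2 * α * β * (u i ^ 2 * (u j * e j)) + β ^ 2 * (u i ^ 2 * u j ^ 2) := fun i j => by
      simp only [Y]; ring
    simp only [h, Finset.sum_add_distrib, Finset.sum_sub_distrib, ← Finset.mul_sum,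
      ← Finset.sum_mul]
    simp only [R, α, β, dotProduct, sq]
    ring
  have hCS : R ^ 2 ≤ (∑ i, ∑ j, W i j ^ 2) * (α ^ 2 * R) := by
    have := Finset.sum_mul_sq_le_sq_mul_sq univ (fun p : ι × ι => W p.1 p.2) (fun p => Y p.1 p.2)
    simpa only [Fintype.sum_prod_type, hWY, hYY] using this
  have hF : 0 ≤ ∑ i, ∑ j, W i j ^ 2 := by positivity
  rcases le_or_gt R 0 with hR | hR <;> nlinarith

theorem walk_sums_inequality {W : Matrix ι ι ℝ} (hW : W.IsSymm) (hb : ∀ i j, |W i j| ≤ 1)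
    {n : ℝ} {d e : ι → ℝ} (hn : (Fintype.card ι : ℝ) = n) (hd : W *ᵥ 1 = d) (he : W *ᵥ d = e) :
    n ^ 2 * (1 ⬝ᵥ d) ^ 2 - 2 * (1 ⬝ᵥ d) * (d ⬝ᵥ e) - 2 * n ^ 3 * (d ⬝ᵥ d) + 2 * n * (e ⬝ᵥ e)
      + (d ⬝ᵥ d) ^ 2 ≤ 0 := by
  subst hn
  rcases isEmpty_or_nonempty ι with hι | hι
  · simp [dotProduct]
  have hop : ∀ v, (W *ᵥ v) ⬝ᵥ (W *ᵥ v) ≤ (Fintype.card ι : ℝ) ^ 2 * (v ⬝ᵥ v) := fun v =>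
    (mulVec_dotProduct_self_le_sum_sq_mul W v).trans
      (mul_le_mul_of_nonneg_right (sum_sum_sq_le_card_sq hb) (dotProduct_self_star_nonneg v))
  have hCS := sq_mul_dotProduct_sub_le hop 1 d
  have hFrob := two_mul_dotProduct_self_mul_le hW d
  have hA := hop 1
  have hP := hop d
  rw [hd, he, one_dotProduct_one] at hCS
  rw [he] at hFrob hP
  rw [hd, one_dotProduct_one] at hA
  have hF := sum_sum_sq_le_card_sq hb
  have hA0 := dotProduct_self_star_nonneg d
  have hAP : (d ⬝ᵥ d) * (e ⬝ᵥ e) - (d ⬝ᵥ e) ^ 2 ≤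
      (Fintype.card ι : ℝ) ^ 3 * ((Fintype.card ι : ℝ) ^ 2 * (d ⬝ᵥ d) - e ⬝ᵥ e) := by
    nlinarith
  -- multiplied by `n²`, the claim is the sum of `hCS` and `hAP`
  refine nonpos_of_mul_nonpos_right ?_ (by positivity : 0 < (Fintype.card ι : ℝ) ^ 2)
  nlinarith

theorem trace_vecMulVec_mul (u v : ι → ℝ) (X : Matrix ι ι ℝ) :
    trace (vecMulVec u v * X) = v ⬝ᵥ (X *ᵥ u) := by
  rw [vecMulVec_mul, trace_vecMulVec, dotProduct_mulVec, dotProduct_comm]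

theorem trace_card_smul_sub_mul_self_mul_sq {W : Matrix ι ι ℝ} (hW : W.IsSymm) {n : ℝ}
    {d e : ι → ℝ} (hn : (Fintype.card ι : ℝ) = n) (hd : W *ᵥ 1 = d) (he : W *ᵥ d = e) :
    trace ((n • vecMulVec 1 1 - W * W) * (vecMulVec d 1 - vecMulVec 1 d) *
      (vecMulVec d 1 - vecMulVec 1 d)) =
      n ^ 2 * (1 ⬝ᵥ d) ^ 2 - 2 * (1 ⬝ᵥ d) * (d ⬝ᵥ e) - n ^ 3 * (d ⬝ᵥ d) + (d ⬝ᵥ d) ^ 2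
        + n * (e ⬝ᵥ e) := by
  have h1e : 1 ⬝ᵥ e = d ⬝ᵥ d := by rw [← he, hW.dotProduct_mulVec_comm, hd]
  have h1We : 1 ⬝ᵥ (W *ᵥ e) = d ⬝ᵥ e := by rw [hW.dotProduct_mulVec_comm, hd]
  have hdWe : d ⬝ᵥ (W *ᵥ e) = e ⬝ᵥ e := by rw [hW.dotProduct_mulVec_comm, he]
  rw [trace_mul_comm]
  simp only [Matrix.mul_sub, Matrix.sub_mul, Matrix.mul_assoc, vecMulVec_mul_vecMulVec,
    vecMulVec_smul, Matrix.smul_mul, trace_sub, trace_vecMulVec_mul, smul_mulVec, mulVec_smul,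
    vecMulVec_mulVec, ← mulVec_mulVec, dotProduct_smul, smul_eq_mul, op_smul_eq_smul,
    one_dotProduct_one, hn, hd, he, h1e, h1We, hdWe, dotProduct_comm d 1]
  ring

variable [DecidableEq ι]

theorem trace_add_pow_three {R : Type*} [CommRing R] (X Y : Matrix ι ι R) :
    trace ((X + Y) ^ 3) = trace (X ^ 3) + 3 * trace (X * X * Y) + 3 * trace (X * Y * Y)
      + trace (Y ^ 3) := by
  have hXYX : trace (X * Y * X) = trace (X * X * Y) := trace_mul_cycle X Y X
  have hYXX : trace (Y * X * X) = trace (X * X * Y) := by rw [trace_mul_cycle, trace_mul_cycle]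
  have hYXY : trace (Y * X * Y) = trace (X * Y * Y) := (trace_mul_cycle X Y Y).symm
  have hYYX : trace (Y * Y * X) = trace (X * Y * Y) := by rw [trace_mul_cycle, trace_mul_cycle]
  simp only [pow_three, add_mul, mul_add, trace_add, ← Matrix.mul_assoc]
  rw [hXYX, hYXX, hYXY, hYYX]
  ring

theorem trace_add_pow_three_of_isSymm_of_transpose_eq_neg {P Q : Matrix ι ι ℝ} (hP : P.IsSymm)
    (hQ : Qᵀ = -Q) : trace ((P + Q) ^ 3) = trace (P ^ 3) + 3 * trace (P * Q * Q) := by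
  have htrace : ∀ M : Matrix ι ι ℝ, Mᵀ = -M → trace M = 0 := fun M hM => by
    have := trace_transpose M
    rw [hM, trace_neg] at this
    linarith
  have hPQP : trace (P * Q * P) = 0 :=
    htrace _ (by rw [transpose_mul, transpose_mul, hP.eq, hQ]; noncomm_ring)
  have hQQQ : trace (Q ^ 3) = 0 := htrace _ (by rw [transpose_pow, hQ]; noncomm_ring)
  rw [trace_add_pow_three, ← trace_mul_cycle P Q P, hPQP, hQQQ]
  ring

theorem Matrix.IsSymm.trace_pow_two_mul_nonneg {W : Matrix ι ι ℝ} (hW : W.IsSymm) (k : ℕ) :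
    0 ≤ trace (W ^ (2 * k)) := by
  have h : W ^ (2 * k) = (W ^ k)ᴴ * W ^ k := by
    rw [conjTranspose_eq_transpose_of_trivial, (hW.pow k).eq, ← pow_add, two_mul]
  rw [h]
  exact (posSemidef_conjTranspose_mul_self _).trace_nonneg

theorem trace_card_smul_sub_mul_self_pow_three {W : Matrix ι ι ℝ} (hW : W.IsSymm) {n : ℝ}
    {d e : ι → ℝ} (hn : (Fintype.card ι : ℝ) = n) (hd : W *ᵥ 1 = d) (he : W *ᵥ d = e) :
    trace ((n • vecMulVec 1 1 - W * W) ^ 3) =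
      n ^ 6 - 3 * n ^ 3 * (d ⬝ᵥ d) + 3 * n * (e ⬝ᵥ e) - trace (W ^ 6) := by
  have h6 : W ^ 6 = W * W * (W * W) * (W * W) := by noncomm_ring
  have h1e : 1 ⬝ᵥ e = d ⬝ᵥ d := by rw [← he, hW.dotProduct_mulVec_comm, hd]
  have h1WWe : 1 ⬝ᵥ (W *ᵥ W *ᵥ e) = e ⬝ᵥ e := by
    rw [hW.dotProduct_mulVec_comm, hd, hW.dotProduct_mulVec_comm, he]
  rw [sub_eq_add_neg, trace_add_pow_three, h6]
  simp only [pow_three, neg_mul, mul_neg, neg_neg, trace_neg, Matrix.smul_mul, Matrix.mul_smul,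
    trace_smul, Matrix.mul_assoc, trace_vecMulVec_mul, ← mulVec_mulVec, vecMulVec_mulVec,
    mulVec_smul, dotProduct_smul, smul_eq_mul, op_smul_eq_smul, one_dotProduct_one, hn, hd, he,
    h1e, h1WWe]
  ring

theorem vecMulVec_one_add_mul_sub {W : Matrix ι ι ℝ} (hW : W.IsSymm) :
    (vecMulVec 1 1 + W) * (vecMulVec 1 1 - W) =
      ((Fintype.card ι : ℝ) • vecMulVec 1 1 - W * W) +
        (vecMulVec (W *ᵥ 1) 1 - vecMulVec 1 (W *ᵥ 1)) := by
  have hJW : vecMulVec 1 1 * W = vecMulVec 1 (W *ᵥ 1) := by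
    rw [vecMulVec_mul, ← mulVec_transpose, hW.eq]
  rw [add_mul, mul_sub, mul_sub, vecMulVec_mul_vecMulVec, one_dotProduct_one, vecMulVec_smul, hJW,
    mul_vecMulVec]
  abel

theorem trace_vecMulVec_one_add_mul_sub_pow_three_le {W : Matrix ι ι ℝ} (hW : W.IsSymm)
    (hb : ∀ i j, |W i j| ≤ 1) :
    trace (((vecMulVec 1 1 + W) * (vecMulVec 1 1 - W)) ^ 3) ≤ (Fintype.card ι : ℝ) ^ 6 := by
  have hP : ((Fintype.card ι : ℝ) • vecMulVec (1 : ι → ℝ) 1 - W * W).IsSymm :=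
    (IsSymm.smul (transpose_vecMulVec _ _) _).sub (by rw [IsSymm, transpose_mul, hW.eq])
  have hQ : (vecMulVec (W *ᵥ 1) 1 - vecMulVec 1 (W *ᵥ 1))ᵀ =
      -(vecMulVec (W *ᵥ 1) 1 - vecMulVec 1 (W *ᵥ 1)) := by
    rw [transpose_sub, transpose_vecMulVec, transpose_vecMulVec, neg_sub]
  rw [vecMulVec_one_add_mul_sub hW, trace_add_pow_three_of_isSymm_of_transpose_eq_neg hP hQ,
    trace_card_smul_sub_mul_self_pow_three hW rfl rfl rfl,
    trace_card_smul_sub_mul_self_mul_sq hW rfl rfl rfl]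
  have := walk_sums_inequality hW hb rfl rfl rfl
  have := hW.trace_pow_two_mul_nonneg 3
  linarith

end SymmetricMatrix

section CycleSums

variable {V : Type*} [Fintype V]

theorem sum_pi_fin_succ {n : ℕ} (g : (Fin (n + 1) → V) → ℝ) :
    ∑ f, g f = ∑ a, ∑ t : Fin n → V, g (vecCons a t) := by
  rw [← Fintype.sum_prod_type']
  exact (Fintype.sum_equiv (Fin.consEquiv fun _ => V) _ _ fun _ => rfl).symm

theorem sum_prod_cycle_six_eq_trace (M : Fin 6 → Matrix V V ℝ) :
    ∑ f : Fin 6 → V, ∏ i, M i (f i) (f (i + 1)) = trace (M 0 * M 1 * M 2 * M 3 * M 4 * M 5) := by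
  simp only [sum_pi_fin_succ, Fintype.sum_unique, Fin.prod_univ_six, Fin.reduceAdd, Matrix.cons_val]
  simp only [Matrix.mul_assoc]
  simp only [trace, Matrix.diag, mul_apply, Finset.mul_sum, mul_assoc]

end CycleSums

namespace ECGraph

variable {V : Type*} (G : ECGraph V)

open Classical in
noncomputable def colorMatrix (b : Bool) : Matrix V V ℝ :=
  of fun x y => if G.graph.Adj x y ∧ G.color x y = b then 1 else 0

noncomputable def signedAdjMatrix : Matrix V V ℝ := G.colorMatrix true - G.colorMatrix false

theorem colorMatrix_nonneg (b : Bool) (x y : V) : 0 ≤ G.colorMatrix b x y := by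
  simp only [colorMatrix, of_apply]
  split_ifs <;> norm_num

theorem colorMatrix_comm (b : Bool) (x y : V) : G.colorMatrix b y x = G.colorMatrix b x y := by
  simp only [colorMatrix, of_apply]
  rw [G.graph.adj_comm, G.color_symm]

theorem colorMatrix_true_add_colorMatrix_false_le_one (x y : V) :
    G.colorMatrix true x y + G.colorMatrix false x y ≤ 1 := by
  unfold colorMatrix
  by_cases h : G.color x y <;> simp [h] <;> split_ifs <;> norm_num

theorem isSymm_signedAdjMatrix : G.signedAdjMatrix.IsSymm :=
  IsSymm.ext fun x y => by simp only [signedAdjMatrix, Matrix.sub_apply, colorMatrix_comm]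

theorem abs_signedAdjMatrix_apply_le_one (x y : V) : |G.signedAdjMatrix x y| ≤ 1 := by
  have := G.colorMatrix_true_add_colorMatrix_false_le_one x y
  have := G.colorMatrix_nonneg true x y
  have := G.colorMatrix_nonneg false x y
  rw [signedAdjMatrix, Matrix.sub_apply, abs_le]
  constructor <;> linarith

theorem colorMatrix_le (b : Bool) (x y : V) :
    G.colorMatrix b x y ≤
      ((2 : ℝ)⁻¹ • (vecMulVec 1 1 + if b then G.signedAdjMatrix else -G.signedAdjMatrix) :
        Matrix V V ℝ) x y := by
  have := G.colorMatrix_true_add_colorMatrix_false_le_one x y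
  have := G.colorMatrix_nonneg true x y
  have := G.colorMatrix_nonneg false x y
  cases b <;>
  · simp only [signedAdjMatrix, Matrix.smul_apply, Matrix.add_apply, vecMulVec_apply,
      Matrix.neg_apply, Matrix.sub_apply, Pi.one_apply, smul_eq_mul, Bool.false_eq_true, if_false,
      if_true]
    linarith

theorem isHom_iff_of_graph_eq_cycleGraph {n : ℕ} {H : ECGraph (Fin (n + 2))}
    (hH : H.graph = cycleGraph (n + 2)) (f : Fin (n + 2) → V) :
    IsHom H G f ↔
      ∀ i, G.graph.Adj (f i) (f (i + 1)) ∧ G.color (f i) (f (i + 1)) = H.color i (i + 1) := by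
  have hadj : ∀ i j, H.graph.Adj i j ↔ j = i + 1 ∨ i = j + 1 := fun i j => by
    rw [hH, cycleGraph_adj, sub_eq_iff_eq_add, sub_eq_iff_eq_add, add_comm 1 i, add_comm 1 j,
      or_comm]
  refine ⟨fun hf i => hf i (i + 1) ((hadj _ _).mpr (.inl rfl)), fun hf i j hij => ?_⟩
  rcases (hadj i j).mp hij with rfl | rfl
  · exact hf i
  · obtain ⟨hadj, hcol⟩ := hf j
    exact ⟨hadj.symm, by rw [G.color_symm, hcol, H.color_symm]⟩

theorem natCard_isHom_eq_sum_prod [Fintype V] {n : ℕ} {H : ECGraph (Fin (n + 2))}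
    (hH : H.graph = cycleGraph (n + 2)) :
    (Nat.card {f : Fin (n + 2) → V // IsHom H G f} : ℝ) =
      ∑ f : Fin (n + 2) → V, ∏ i, G.colorMatrix (H.color i (i + 1)) (f i) (f (i + 1)) := by
  classical
  simp only [Nat.card_eq_fintype_card, Fintype.card_subtype, colorMatrix, of_apply, prod_boole,
    G.isHom_iff_of_graph_eq_cycleGraph hH, Finset.mem_univ, true_implies]
  rw [Finset.sum_boole]

theorem natCard_isHom_C6A_le [Fintype V] :
    (Nat.card {f : Fin 6 → V // IsHom C6A G f} : ℝ) ≤ (1 / 2) ^ 6 * (Fintype.card V : ℝ) ^ 6 := by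
  classical
  let U : Bool → Matrix V V ℝ := fun b =>
    (2 : ℝ)⁻¹ • (vecMulVec 1 1 + if b then G.signedAdjMatrix else -G.signedAdjMatrix)
  calc (Nat.card {f : Fin 6 → V // IsHom C6A G f} : ℝ)
      = ∑ f : Fin 6 → V, ∏ i, G.colorMatrix (C6A.color i (i + 1)) (f i) (f (i + 1)) :=
        G.natCard_isHom_eq_sum_prod rfl
    _ ≤ ∑ f : Fin 6 → V, ∏ i, U (C6A.color i (i + 1)) (f i) (f (i + 1)) :=
        sum_le_sum fun f _ => prod_le_prod (fun i _ => G.colorMatrix_nonneg _ _ _)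
          fun i _ => G.colorMatrix_le _ _ _
    _ = trace (U true * U false * U true * U false * U true * U false) :=
        sum_prod_cycle_six_eq_trace _
    _ = (1 / 2) ^ 6 * trace (((vecMulVec 1 1 + G.signedAdjMatrix) *
          (vecMulVec 1 1 - G.signedAdjMatrix)) ^ 3) := by
      simp only [U, if_true, Bool.false_eq_true, if_false, ← sub_eq_add_neg, Matrix.smul_mul,
        Matrix.mul_smul, smul_smul, pow_three, Matrix.mul_assoc, trace_smul, smul_eq_mul]
      norm_num
    _ ≤ (1 / 2) ^ 6 * (Fintype.card V : ℝ) ^ 6 := by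
      gcongr
      exact trace_vecMulVec_one_add_mul_sub_pow_three_le G.isSymm_signedAdjMatrix
        G.abs_signedAdjMatrix_apply_le_one

end ECGraph

/-- Main theorem: every edge-coloured graph `G` satisfies `t(C_6^A, G) ≤ (1/2)^6`. -/
theorem homDensity_C6A_le :
    ∀ (V : Type) [Fintype V] (G : ECGraph V), homDensity C6A G ≤ (1 / 2 : ℝ) ^ 6 := by
  intro V _ G
  rw [homDensity, Fintype.card_fin]
  rcases (Nat.cast_nonneg (Fintype.card V) : (0 : ℝ) ≤ _).eq_or_lt with h | h
  · rw [← h]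
    norm_num
  · rw [div_le_iff₀ (by positivity)]
    exact G.natCard_isHom_C6A_le
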